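/- Abstract predictor clock well-definedness: the value of y^abs_p at position i is defined (non-⊥) iff E(i') holds, where i' is the abstract successor of i (and i has an abstract successor); when defined, it equals τ(k) − τ(i) where k is the least position ≥ i' on the MAP through i at which p holds, and this k is unique. -/
import Mathlib


/-- The type of a position in a word over a pushdown alphabet. -/
inductive SymType : Type
  | call | ret | int
deriving DecidableEq

/-- The factor strictly between `i` and `j` is well matched:
calls and returns balance out, and no prefix has more returns than calls. -/
def wellMatched (kind : ℕ → SymType) (i j : ℕ) : Prop :=
  (((Finset.Ioo i j).filter fun k => kind k = SymType.call).card =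
   ((Finset.Ioo i j).filter fun k => kind k = SymType.ret).card) ∧
  ∀ m ∈ Finset.Ioo i j,
    ((Finset.Ioc i m).filter fun k => kind k = SymType.ret).card ≤
    ((Finset.Ioc i m).filter fun k => kind k = SymType.call).card

/-- `j` is the matching return of the call `i`: the least return `j > i`
such that the factor strictly between `i` and `j` is well matched. -/
def MatchRet (kind : ℕ → SymType) (i j : ℕ) : Prop :=
  kind i = SymType.call ∧ i < j ∧ kind j = SymType.ret ∧ wellMatched kind i j ∧
  ∀ j', i < j' → j' < j → ¬ (kind j' = SymType.ret ∧ wellMatched kind i j')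

/-- The abstract successor relation: a matched call maps to its matching
return; any non-call position maps to the next position provided it is not
a return. Unmatched calls (and positions followed by a return) have no
abstract successor. -/
def absSucc (kind : ℕ → SymType) (i j : ℕ) : Prop :=
  (kind i = SymType.call ∧ MatchRet kind i j) ∨
  (kind i ≠ SymType.call ∧ j = i + 1 ∧ kind (i + 1) ≠ SymType.ret)

/-- `j` is reachable from `i` along abstract successors. -/
def reach (kind : ℕ → SymType) : ℕ → ℕ → Prop := Relation.ReflTransGen (absSucc kind)

/-- `i` and `j` lie on the same maximal abstract path (MAP). -/
def onSameMAP (kind : ℕ → SymType) (i j : ℕ) : Prop := reach kind i j ∨ reach kind j i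

/-- `s` is the initial position of a MAP: nothing maps to it. -/
def isMAPStart (kind : ℕ → SymType) (s : ℕ) : Prop := ∀ k, ¬ absSucc kind k s

/-- `s` is the initial position of the MAP visiting `i`. -/
def startsMAPOf (kind : ℕ → SymType) (s i : ℕ) : Prop := isMAPStart kind s ∧ reach kind s i

/-- The MAP visiting `i` is infinite (has no last position). -/
def infMAP (kind : ℕ → SymType) (i : ℕ) : Prop := ∀ j, reach kind i j → ∃ k, absSucc kind j k

/-- `p_∞` holds at `i` iff the MAP visiting `i` does not start at a position
`s > 0` such that `s - 1` is a call having a matching return. -/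
def pInf (kind : ℕ → SymType) (i : ℕ) : Prop :=
  ¬ ∃ s, startsMAPOf kind s i ∧ 0 < s ∧ kind (s - 1) = SymType.call ∧
    ∃ r, MatchRet kind (s - 1) r
lemma absSucc_lt {kind : ℕ → SymType} {i j : ℕ} (h : absSucc kind i j) : i < j := by
  rcases h with ⟨_, _, hij, _⟩ | ⟨_, rfl, _⟩
  · exact hij
  · omega

lemma absSucc_functional {kind : ℕ → SymType} {i j j' : ℕ}
    (h : absSucc kind i j) (h' : absSucc kind i j') : j = j' := by
  rcases h with ⟨hc, hm⟩ | ⟨hc, rfl, _⟩ <;> rcases h' with ⟨hc', hm'⟩ | ⟨hc', rfl, _⟩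
  · -- both MatchRet
    by_contra hne
    rcases hm with ⟨_, hij, hr, hw, hmin⟩
    rcases hm' with ⟨_, hij', hr', hw', hmin'⟩
    rcases lt_or_gt_of_ne hne with hlt | hlt
    · exact hmin' j hij hlt ⟨hr, hw⟩
    · exact hmin j' hij' hlt ⟨hr', hw'⟩
  · exact absurd hc hc'
  · exact absurd hc' hc
  · rfl

lemma reach_le {kind : ℕ → SymType} {i j : ℕ} (h : reach kind i j) : i ≤ j := by
  induction h with
  | refl => exact le_refl i
  | tail _ hstep ih => exact ih.trans (absSucc_lt hstep).le

lemma reach_total {kind : ℕ → SymType} {a b c : ℕ}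
    (hab : reach kind a b) (hac : reach kind a c) : reach kind b c ∨ reach kind c b := by
  induction hab using Relation.ReflTransGen.head_induction_on with
  | refl => exact Or.inl hac
  | head hstep _ ih =>
    rename_i a' x _
    rcases hac.cases_head with rfl | ⟨y, hy, hyc⟩
    · exact Or.inr (Relation.ReflTransGen.head hstep (by assumption))
    · rw [absSucc_functional hstep hy] at *
      exact ih hyc

theorem predictor_clock_aux {kind : ℕ → SymType} {p : ℕ → Prop} {i' : ℕ}
    (hex : ∃ j, reach kind i' j ∧ p j) :
    ∃ k, reach kind i' k ∧ p k ∧ ∀ m, reach kind i' m → p m → reach kind k m := by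
  classical
  have hex' : ∃ k, reach kind i' k ∧ p k := hex
  obtain ⟨hk, hpk⟩ := Nat.find_spec hex'
  set k := Nat.find hex' with hkdef
  have hmin : ∀ m, reach kind i' m ∧ p m → k ≤ m := fun m hm => Nat.find_min' hex' hm
  refine ⟨k, hk, hpk, fun m hrm hpm => ?_⟩
  rcases reach_total hk hrm with h1 | h1
  · exact h1
  · have : m = k := le_antisymm (reach_le h1) (hmin m ⟨hrm, hpm⟩)
    exact this ▸ Relation.ReflTransGen.refl

/-- well-definedness of the abstract predictor clock `y^abs_p`:
it is defined iff `◇^abs p` holds at the abstract successor `i'`; the witness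
position `k` (least `p`-position on the MAP at or after `i'`) is unique, and
so is the value `τ k - τ i`. -/
theorem predictor_clock_well_defined (kind : ℕ → SymType) (p : ℕ → Prop)
    (τ : ℕ → ℝ) (hτ : Monotone τ) (i i' : ℕ) (h : absSucc kind i i') :
    ((∃ j, reach kind i' j ∧ p j) ↔
      ∃ k, reach kind i' k ∧ p k ∧ ∀ m, reach kind i' m → p m → reach kind k m) ∧
    (∀ k k',
      (reach kind i' k ∧ p k ∧ ∀ m, reach kind i' m → p m → reach kind k m) →
      (reach kind i' k' ∧ p k' ∧ ∀ m, reach kind i' m → p m → reach kind k' m) →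
      k = k' ∧ τ k - τ i = τ k' - τ i) := by
  constructor
  · constructor
    · exact predictor_clock_aux
    · rintro ⟨k, hk, hpk, _⟩; exact ⟨k, hk, hpk⟩
  · rintro k k' ⟨hk, hpk, hkm⟩ ⟨hk', hpk', hkm'⟩
    have h1 := reach_le (hkm k' hk' hpk')
    have h2 := reach_le (hkm' k hk hpk)
    have : k = k' := le_antisymm h1 h2
    exact ⟨this, by rw [this]⟩
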